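/- Profile of the mixed tensor: for an opponent game O and a player game P, profile[O ⊗ʳ P]_0 = 1 and, for all n ≥ 0, profile[O ⊗ʳ P]_{n+1} = Σ_{i=0}^{n} C(⌊n/2⌋, ⌊i/2⌋) · γ(i, n−i) · profile[O]_i · profile[P]_{n−i+1}, where γ(i,j) = 1 if i or j is zero or even and 0 otherwise. -/

import Mathlib

/-- Rose trees: the unlabeled shape of a game tree. -/
inductive RTree : Type where
  | node : List RTree → RTree

mutual
/-- An opponent game: a finite list of player games (its children). -/
inductive OGame : Type where
  | mk : List PGame → OGame
/-- A player game: a finite list of opponent games (its children). -/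
inductive PGame : Type where
  | mk : List OGame → PGame
end

mutual
/-- The dual of an opponent game. -/
def OGame.dual : OGame → PGame
  | .mk ps => .mk (ps.attach.map fun ⟨p, _⟩ => p.dual)
/-- The dual of a player game. -/
def PGame.dual : PGame → OGame
  | .mk os => .mk (os.attach.map fun ⟨o, _⟩ => o.dual)
end

mutual
/-- Strategy existence in an opponent game: a conjunction over children. -/
def OGame.strat : OGame → Bool
  | .mk ps => ps.attach.all fun ⟨p, _⟩ => p.strat
/-- Strategy existence in a player game: a disjunction over children. -/
def PGame.strat : PGame → Bool
  | .mk os => os.attach.any fun ⟨o, _⟩ => o.strat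
end

mutual
/-- Tensor of opponent games: `O ⊗ O' = (P_i ⊗ˡ O', O ⊗ʳ P'_k | …)`. -/
def otimes : OGame → OGame → OGame
  | .mk ps, .mk qs => .mk ((ps.attach.map fun ⟨p, _⟩ => oxl p (.mk qs)) ++
      (qs.attach.map fun ⟨q, _⟩ => oxr (.mk ps) q))
  termination_by o o' => sizeOf o + sizeOf o'
  decreasing_by
  · have := List.sizeOf_lt_of_mem ‹p ∈ ps›; simp_all; omega
  · have := List.sizeOf_lt_of_mem ‹q ∈ qs›; simp_all; omega
/-- Mixed tensor `O ⊗ʳ P = {O ⊗ O_j | j ∈ J}`. -/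
def oxr : OGame → PGame → PGame
  | o, .mk os => .mk (os.attach.map fun ⟨oj, _⟩ => otimes o oj)
  termination_by o p => sizeOf o + sizeOf p
  decreasing_by
  · have := List.sizeOf_lt_of_mem ‹oj ∈ os›; simp_all; omega
/-- Mixed tensor `P ⊗ˡ O = {O_j ⊗ O | j ∈ J}`. -/
def oxl : PGame → OGame → PGame
  | .mk os, o => .mk (os.attach.map fun ⟨oj, _⟩ => otimes oj o)
  termination_by p o => sizeOf p + sizeOf o
  decreasing_by
  · have := List.sizeOf_lt_of_mem ‹oj ∈ os›; simp_all; omega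
end

mutual
/-- Par of player games: `P ⅋ P' = {O_j ⅋ˡ P', P ⅋ʳ O'_k | …}`. -/
def parr : PGame → PGame → PGame
  | .mk os, .mk qs => .mk ((os.attach.map fun ⟨o, _⟩ => parrOP o (.mk qs)) ++
      (qs.attach.map fun ⟨q, _⟩ => parrPO (.mk os) q))
  termination_by p p' => sizeOf p + sizeOf p'
  decreasing_by
  · have := List.sizeOf_lt_of_mem ‹o ∈ os›; simp_all; omega
  · have := List.sizeOf_lt_of_mem ‹q ∈ qs›; simp_all; omega
/-- Mixed par `P ⅋ʳ O = (P ⅋ P_i | i ∈ I)`. -/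
def parrPO : PGame → OGame → OGame
  | p, .mk ps => .mk (ps.attach.map fun ⟨pi, _⟩ => parr p pi)
  termination_by p o => sizeOf p + sizeOf o
  decreasing_by
  · have := List.sizeOf_lt_of_mem ‹pi ∈ ps›; simp_all; omega
/-- Mixed par `O ⅋ˡ P = (P_i ⅋ P | i ∈ I)`. -/
def parrOP : OGame → PGame → OGame
  | .mk ps, p => .mk (ps.attach.map fun ⟨pi, _⟩ => parr pi p)
  termination_by o p => sizeOf o + sizeOf p
  decreasing_by
  · have := List.sizeOf_lt_of_mem ‹pi ∈ ps›; simp_all; omega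
end

mutual
/-- The exponential `!O`: `!() = ()` and `!O = ⊗_{i∈I} (b_i : !'P_i)` for `I ≠ ∅`. -/
def bang : OGame → OGame
  | .mk [] => .mk []
  | .mk (p :: ps) =>
      (ps.attach.map fun ⟨q, _⟩ => OGame.mk [bang' q]).foldl otimes (OGame.mk [bang' p])
/-- The auxiliary exponential `!'{a_j : O_j} = {a_j : !O_j}`. -/
def bang' : PGame → PGame
  | .mk os => .mk (os.attach.map fun ⟨o, _⟩ => bang o)
end

mutual
/-- Underlying unlabeled tree of an opponent game. -/
def OGame.toTree : OGame → RTree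
  | .mk ps => .node (ps.attach.map fun ⟨p, _⟩ => p.toTree)
/-- Underlying unlabeled tree of a player game. -/
def PGame.toTree : PGame → RTree
  | .mk os => .node (os.attach.map fun ⟨o, _⟩ => o.toTree)
end

/-- Number of nodes (including the root). -/
def RTree.nodes : RTree → ℕ
  | .node cs => 1 + (cs.attach.map fun ⟨c, _⟩ => c.nodes).sum

/-- Number of parent-child edges. -/
def RTree.edges : RTree → ℕ
  | .node cs => cs.length + (cs.attach.map fun ⟨c, _⟩ => c.edges).sum

/-- Number of leaves. -/
def RTree.leaves : RTree → ℕ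
  | .node [] => 1
  | .node cs => (cs.attach.map fun ⟨c, _⟩ => c.leaves).sum

/-- Uniform size: `u[leaf] = 0`, `u[node with n children] = (n-1) + Σ u[child]`. -/
def RTree.usize : RTree → ℕ
  | .node [] => 0
  | .node cs => (cs.length - 1) + (cs.attach.map fun ⟨c, _⟩ => c.usize).sum

/-- Depth: leaves have depth 0. -/
def RTree.depth : RTree → ℕ
  | .node cs => (cs.attach.map fun ⟨c, _⟩ => c.depth + 1).foldr max 0

/-- `profile t k` is the number of nodes of `t` at depth `k`. -/
def RTree.profile : RTree → ℕ → ℕ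
  | _, 0 => 1
  | .node cs, k + 1 => (cs.attach.map fun ⟨c, _⟩ => c.profile k).sum

mutual
/-- Number of player nodes of an opponent game. -/
def OGame.pnodes : OGame → ℕ
  | .mk ps => (ps.attach.map fun ⟨p, _⟩ => p.pnodes).sum
/-- Number of player nodes of a player game (the root counts). -/
def PGame.pnodes : PGame → ℕ
  | .mk os => 1 + (os.attach.map fun ⟨o, _⟩ => o.pnodes).sum
end

mutual
/-- Number of edges leaving opponent nodes, for an opponent game. -/
def OGame.eo : OGame → ℕ
  | .mk ps => ps.length + (ps.attach.map fun ⟨p, _⟩ => p.eo).sum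
/-- Number of edges leaving opponent nodes, for a player game. -/
def PGame.eo : PGame → ℕ
  | .mk os => (os.attach.map fun ⟨o, _⟩ => o.eo).sum
end

mutual
/-- Number of edges leaving player nodes, for an opponent game. -/
def OGame.ep : OGame → ℕ
  | .mk ps => (ps.attach.map fun ⟨p, _⟩ => p.ep).sum
/-- Number of edges leaving player nodes, for a player game. -/
def PGame.ep : PGame → ℕ
  | .mk os => os.length + (os.attach.map fun ⟨o, _⟩ => o.ep).sum
end

/-- `γ(i,j) = 1` if `i` or `j` is zero or even, else `0`. -/
def gammaCoef (i j : ℕ) : ℕ :=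
  if i = 0 ∨ j = 0 ∨ i % 2 = 0 ∨ j % 2 = 0 then 1 else 0

mutual
/-- The single-branch player chain `L_n`. -/
def Lp : ℕ → PGame
  | 0 => .mk []
  | n + 1 => .mk [Lo n]
/-- The single-branch opponent chain `L'_n`. -/
def Lo : ℕ → OGame
  | 0 => .mk []
  | n + 1 => .mk [Lp n]
end

/-!
Put `c(i, j) = C(⌊(i + j)/2⌋, ⌊i/2⌋) · γ(i, j)`. Unless `i` and `j` are both odd (when `c` vanishes)
this is the lattice-path count `C(⌊i/2⌋ + ⌊j/2⌋, ⌊i/2⌋)`, so `c` obeys the Pascal recurrence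
`c(i, j) = c(i, j - 2) + c(i - 2, j)`. The depth-`(n + 2)` nodes of `O ⊗ O'` are the depth-`n` nodes
of the games `O_ab ⊗ O'` and `O ⊗ O'_cd`, two levels below the roots of `O` and `O'`; hence, by a
two-step induction, `profile[O ⊗ O']_n = Σ_{i + j = n} c(i, j) profile[O]_i profile[O']_j`.
The formula for `O ⊗ʳ P` is one more level of this.
-/

open Finset

def tensorCoef (i j : ℕ) : ℕ := ((i + j) / 2).choose (i / 2) * gammaCoef i j

lemma tensorCoef_eq (i j : ℕ) :
    tensorCoef i j = if Odd i ∧ Odd j then 0 else (i / 2 + j / 2).choose (i / 2) := by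
  rw [tensorCoef, gammaCoef]
  simp only [Nat.odd_iff]
  split_ifs <;> first
    | omega
    | rw [mul_zero]
    | rw [show (i + j) / 2 = i / 2 + j / 2 by omega, mul_one]

lemma Nat.choose_add_eq_ite_add_ite (a b : ℕ) (h : 1 ≤ a + b) :
    (a + b).choose a = (if 1 ≤ b then (a + (b - 1)).choose a else 0) +
      (if 1 ≤ a then (a - 1 + b).choose (a - 1) else 0) := by
  rcases a with _ | a <;> rcases b with _ | b
  · omega
  · simp
  · simp
  · simp only [le_add_iff_nonneg_left, zero_le, if_true, add_tsub_cancel_right]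
    rw [show a + 1 + (b + 1) = a + b + 1 + 1 by omega, Nat.choose_succ_succ', add_comm]
    ring_nf

lemma tensorCoef_eq_ite_add_ite (i j : ℕ) (h : 2 ≤ i + j) :
    tensorCoef i j = (if 2 ≤ j then tensorCoef i (j - 2) else 0) +
      (if 2 ≤ i then tensorCoef (i - 2) j else 0) := by
  have hpascal := Nat.choose_add_eq_ite_add_ite (i / 2) (j / 2)
  simp only [tensorCoef_eq, Nat.odd_iff, show (i - 2) / 2 = i / 2 - 1 by omega,
    show (j - 2) / 2 = j / 2 - 1 by omega]
  split_ifs at hpascal ⊢ <;> omega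

lemma sum_antidiagonal_tensorCoef_add_two (f g : ℕ → ℕ) (n : ℕ) :
    ∑ p ∈ antidiagonal (n + 2), tensorCoef p.1 p.2 * f p.1 * g p.2 =
      ∑ p ∈ antidiagonal n, tensorCoef p.1 p.2 * f (p.1 + 2) * g p.2 +
        ∑ p ∈ antidiagonal n, tensorCoef p.1 p.2 * f p.1 * g (p.2 + 2) := by
  rw [sum_congr rfl fun p hp => by
    rw [tensorCoef_eq_ite_add_ite p.1 p.2 (by rw [mem_antidiagonal.mp hp]; omega), add_mul, add_mul]]
  rw [sum_add_distrib, add_comm]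
  congr 1
  · simp [Nat.sum_antidiagonal_succ]
  · simp [Nat.sum_antidiagonal_succ']

lemma RTree.profile_zero (t : RTree) : t.profile 0 = 1 := by
  cases t; rw [RTree.profile]

lemma RTree.profile_node_succ (cs : List RTree) (k : ℕ) :
    (RTree.node cs).profile (k + 1) = (cs.map (·.profile k)).sum := by
  rw [RTree.profile]; simp

lemma OGame.profile_mk_succ (ps : List PGame) (k : ℕ) :
    (OGame.mk ps).toTree.profile (k + 1) = (ps.map fun p => p.toTree.profile k).sum := by
  simp [OGame.toTree, RTree.profile_node_succ, Function.comp_def]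

lemma PGame.profile_mk_succ (os : List OGame) (k : ℕ) :
    (PGame.mk os).toTree.profile (k + 1) = (os.map fun o => o.toTree.profile k).sum := by
  simp [PGame.toTree, RTree.profile_node_succ, Function.comp_def]

lemma otimes_mk_mk (ps qs : List PGame) :
    otimes (.mk ps) (.mk qs) = .mk (ps.map (oxl · (.mk qs)) ++ qs.map (oxr (.mk ps))) := by
  rw [otimes]; simp

lemma oxr_mk (O : OGame) (os : List OGame) : oxr O (.mk os) = .mk (os.map (otimes O)) := by
  rw [oxr]; simp

lemma oxl_mk (os : List OGame) (O : OGame) : oxl (.mk os) O = .mk (os.map (otimes · O)) := by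
  rw [oxl]; simp

lemma List.sum_map_finset_sum {α ι M : Type*} [AddCommMonoid M] (l : List α) (s : Finset ι)
    (f : α → ι → M) : (l.map fun x => ∑ i ∈ s, f x i).sum = ∑ i ∈ s, (l.map fun x => f x i).sum := by
  simpa using Multiset.sum_map_sum (m := (l : Multiset α)) (s := s) (f := f)

def OtimesProfileAt (n : ℕ) : Prop :=
  ∀ O O' : OGame, (otimes O O').toTree.profile n =
    ∑ p ∈ antidiagonal n, tensorCoef p.1 p.2 * O.toTree.profile p.1 * O'.toTree.profile p.2

lemma profile_oxr_succ_of_otimesProfileAt {n : ℕ} (h : OtimesProfileAt n) (O : OGame) (P : PGame) :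
    (oxr O P).toTree.profile (n + 1) =
      ∑ p ∈ antidiagonal n, tensorCoef p.1 p.2 * O.toTree.profile p.1 * P.toTree.profile (p.2 + 1) := by
  obtain ⟨os⟩ := P
  simp only [oxr_mk, PGame.profile_mk_succ, List.map_map, Function.comp_def, h O,
    List.sum_map_finset_sum, List.sum_map_mul_left]

lemma profile_oxl_succ_of_otimesProfileAt {n : ℕ} (h : OtimesProfileAt n) (P : PGame) (O : OGame) :
    (oxl P O).toTree.profile (n + 1) =
      ∑ p ∈ antidiagonal n, tensorCoef p.1 p.2 * P.toTree.profile (p.1 + 1) * O.toTree.profile p.2 := by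
  obtain ⟨os⟩ := P
  simp only [oxl_mk, PGame.profile_mk_succ, List.map_map, Function.comp_def, (h · O),
    List.sum_map_finset_sum, List.sum_map_mul_left, List.sum_map_mul_right]

lemma otimesProfileAt_add_two {n : ℕ} (h : OtimesProfileAt n) : OtimesProfileAt (n + 2) := by
  rintro ⟨ps⟩ ⟨qs⟩
  rw [otimes_mk_mk, OGame.profile_mk_succ, List.map_append, List.sum_append, List.map_map,
    List.map_map, sum_antidiagonal_tensorCoef_add_two]
  simp only [Function.comp_def, profile_oxl_succ_of_otimesProfileAt h,
    profile_oxr_succ_of_otimesProfileAt h, List.sum_map_finset_sum, List.sum_map_mul_left,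
    List.sum_map_mul_right, ← OGame.profile_mk_succ]

lemma otimesProfileAt_zero : OtimesProfileAt 0 := by
  intro O O'
  simp [RTree.profile_zero, tensorCoef, gammaCoef]

lemma otimesProfileAt_one : OtimesProfileAt 1 := by
  rintro ⟨ps⟩ ⟨qs⟩
  simp [otimes_mk_mk, OGame.profile_mk_succ, RTree.profile_zero, Nat.sum_antidiagonal_succ,
    tensorCoef, gammaCoef, Function.comp_def, add_comm]

lemma otimesProfileAt (n : ℕ) : OtimesProfileAt n :=
  Nat.twoStepInduction otimesProfileAt_zero otimesProfileAt_one
    (fun _ h _ => otimesProfileAt_add_two h) n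

/-- profile of the mixed tensor O ⊗ʳ P. -/
theorem profile_oxr (O : OGame) (P : PGame) :
    (oxr O P).toTree.profile 0 = 1 ∧
    ∀ n : ℕ,
      (oxr O P).toTree.profile (n + 1) =
        ∑ i ∈ Finset.range (n + 1),
          Nat.choose (n / 2) (i / 2) * gammaCoef i (n - i) *
            O.toTree.profile i * P.toTree.profile (n - i + 1) := by
  refine ⟨RTree.profile_zero _, fun n => ?_⟩
  rw [profile_oxr_succ_of_otimesProfileAt (otimesProfileAt n),
    Nat.sum_antidiagonal_eq_sum_range_succ
      (fun i j => tensorCoef i j * O.toTree.profile i * P.toTree.profile (j + 1))]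
  refine sum_congr rfl fun i hi => ?_
  rw [tensorCoef, Nat.add_sub_cancel' (by simpa [Nat.lt_succ_iff] using hi)]
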